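/- Let Ψ be a (sub)critical branching mechanism which is not identically zero, so that Ψ is a strictly increasing bijection of (0,∞) onto (0,∞); let Φ denote its inverse function and Φ' the derivative of Φ. Then: (a) the function q ↦ 1/Φ'(q) is a Bernstein function; (b) the function q ↦ q/Φ(q) is a Bernstein function; and (c) the function q ↦ 1/(Φ(q) Φ'(q)) is completely monotone on (0,∞). -/

import Mathlib

open MeasureTheory Real Set

noncomputable section

/-- A Bernstein function: infinitely differentiable on `(0,∞)`, nonnegative there,
and `(-1)^(n-1) f^(n)(q) ≥ 0` for all `n ≥ 1` and `q > 0`. -/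
def IsBernstein (f : ℝ → ℝ) : Prop :=
  ContDiffOn ℝ (⊤ : ℕ∞) f (Ioi 0) ∧
  (∀ q > (0:ℝ), 0 ≤ f q) ∧
  ∀ n : ℕ, 1 ≤ n → ∀ q > (0:ℝ), 0 ≤ (-1 : ℝ) ^ (n - 1) * iteratedDerivWithin n f (Ioi 0) q

/-- A completely monotone function: infinitely differentiable on `(0,∞)` with
`(-1)^n f^(n)(q) ≥ 0` for all `n ≥ 0` and `q > 0`. -/
def IsCompletelyMonotone (f : ℝ → ℝ) : Prop :=
  ContDiffOn ℝ (⊤ : ℕ∞) f (Ioi 0) ∧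
  ∀ n : ℕ, ∀ q > (0:ℝ), 0 ≤ (-1 : ℝ) ^ n * iteratedDerivWithin n f (Ioi 0) q

/-- A (sub)critical branching mechanism:
`Ψ q = a q + b q² + ∫_{(0,∞)} (e^(-qx) - 1 + qx) Pi(dx)` with `a, b ≥ 0` and
`∫ min(x, x²) Pi(dx) < ∞` (`Pi` a measure carried by `(0,∞)`). -/
def IsBranchingMechanism (Ψ : ℝ → ℝ) : Prop :=
  ∃ (a b : ℝ) (Pi : Measure ℝ), 0 ≤ a ∧ 0 ≤ b ∧ Pi (Iic 0) = 0 ∧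
    (∫⁻ x, ENNReal.ofReal (min x (x ^ 2)) ∂Pi) < ⊤ ∧
    ∀ q > (0:ℝ), Ψ q = a * q + b * q ^ 2 + ∫ x, (Real.exp (-q * x) - 1 + q * x) ∂Pi

namespace BranchAux

variable {ι : Type} (g : ι → ℝ → ℝ)

/-- Product of generators over a multiset. -/
def PP (m : Multiset ι) (q : ℝ) : ℝ := (m.map (fun i => g i q)).prod

/-- Sum of products of generators. -/
def SS (S : Multiset (Multiset ι)) (q : ℝ) : ℝ := (S.map (fun m => PP g m q)).sum

lemma PP_zero (q : ℝ) : PP g (0 : Multiset ι) q = 1 := by simp [PP]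

lemma PP_cons (i : ι) (m : Multiset ι) (q : ℝ) :
    PP g (i ::ₘ m) q = g i q * PP g m q := by simp [PP]

lemma PP_add (m₁ m₂ : Multiset ι) (q : ℝ) :
    PP g (m₁ + m₂) q = PP g m₁ q * PP g m₂ q := by simp [PP]

lemma SS_zero (q : ℝ) : SS g (0 : Multiset (Multiset ι)) q = 0 := by simp [SS]

lemma SS_cons (m : Multiset ι) (S : Multiset (Multiset ι)) (q : ℝ) :
    SS g (m ::ₘ S) q = PP g m q + SS g S q := by simp [SS]

lemma SS_addS (S₁ S₂ : Multiset (Multiset ι)) (q : ℝ) :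
    SS g (S₁ + S₂) q = SS g S₁ q + SS g S₂ q := by simp [SS]

lemma SS_map_add (S : Multiset (Multiset ι)) (m : Multiset ι) (q : ℝ) :
    SS g (S.map (fun m' => m' + m)) q = SS g S q * PP g m q := by
  induction S using Multiset.induction_on with
  | empty => simp [SS]
  | cons m' S ih =>
      simp only [Multiset.map_cons, SS_cons, ih, PP_add]
      ring

lemma SS_map_cons (S : Multiset (Multiset ι)) (i : ι) (q : ℝ) :
    SS g (S.map (fun m' => i ::ₘ m')) q = g i q * SS g S q := by
  induction S using Multiset.induction_on with
  | empty => simp [SS]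
  | cons m' S ih =>
      simp only [Multiset.map_cons, SS_cons, ih, PP_cons]
      ring

variable (hpos : ∀ i, ∀ q ∈ Ioi (0:ℝ), 0 ≤ g i q)

include hpos in
lemma PP_nonneg (m : Multiset ι) : ∀ q ∈ Ioi (0:ℝ), 0 ≤ PP g m q := by
  induction m using Multiset.induction_on with
  | empty => intro q hq; simp [PP_zero]
  | cons i m ih =>
      intro q hq
      rw [PP_cons]
      exact mul_nonneg (hpos i q hq) (ih q hq)

include hpos in
lemma SS_nonneg (S : Multiset (Multiset ι)) : ∀ q ∈ Ioi (0:ℝ), 0 ≤ SS g S q := by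
  induction S using Multiset.induction_on with
  | empty => intro q hq; simp [SS_zero]
  | cons m S ih =>
      intro q hq
      rw [SS_cons]
      exact add_nonneg (PP_nonneg g hpos m q hq) (ih q hq)

variable (D : ι → Multiset (Multiset ι))
variable (hder : ∀ i, ∀ q ∈ Ioi (0:ℝ), HasDerivAt (g i) (-(SS g (D i) q)) q)

include hder in
lemma PP_hasDeriv (m : Multiset ι) :
    ∃ S' : Multiset (Multiset ι), ∀ q ∈ Ioi (0:ℝ),
      HasDerivAt (PP g m) (-(SS g S' q)) q := by
  induction m using Multiset.induction_on with
  | empty =>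
      refine ⟨0, fun q hq => ?_⟩
      simp only [SS_zero, neg_zero]
      have : PP g (0 : Multiset ι) = fun _ => (1:ℝ) := funext fun q => PP_zero g q
      rw [this]
      exact hasDerivAt_const q 1
  | cons i m ih =>
      obtain ⟨S, hS⟩ := ih
      refine ⟨(D i).map (fun m' => m' + m) + S.map (fun m' => i ::ₘ m'), fun q hq => ?_⟩
      have h1 : HasDerivAt (fun q => g i q * PP g m q)
          ((-(SS g (D i) q)) * PP g m q + g i q * (-(SS g S q))) q :=
        (hder i q hq).mul (hS q hq)
      have heq : PP g (i ::ₘ m) = fun q => g i q * PP g m q :=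
        funext fun q => PP_cons g i m q
      rw [heq]
      convert h1 using 1
      rw [SS_addS, SS_map_add, SS_map_cons]
      ring

include hder in
lemma SS_hasDeriv (S : Multiset (Multiset ι)) :
    ∃ S' : Multiset (Multiset ι), ∀ q ∈ Ioi (0:ℝ),
      HasDerivAt (SS g S) (-(SS g S' q)) q := by
  induction S using Multiset.induction_on with
  | empty =>
      refine ⟨0, fun q hq => ?_⟩
      simp only [SS_zero, neg_zero]
      have : SS g (0 : Multiset (Multiset ι)) = fun _ => (0:ℝ) := funext fun q => SS_zero g q
      rw [this]
      exact hasDerivAt_const q 0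
  | cons m S ih =>
      obtain ⟨S₁, hS₁⟩ := PP_hasDeriv g D hder m
      obtain ⟨S₂, hS₂⟩ := ih
      refine ⟨S₁ + S₂, fun q hq => ?_⟩
      have h1 : HasDerivAt (fun q => PP g m q + SS g S q)
          ((-(SS g S₁ q)) + (-(SS g S₂ q))) q := (hS₁ q hq).add (hS₂ q hq)
      have heq : SS g (m ::ₘ S) = fun q => PP g m q + SS g S q :=
        funext fun q => SS_cons g m S q
      rw [heq]
      convert h1 using 1
      rw [SS_addS]
      ring

include hder in
lemma SS_contDiffOn (n : ℕ) : ∀ S : Multiset (Multiset ι),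
    ContDiffOn ℝ n (SS g S) (Ioi (0:ℝ)) := by
  induction n with
  | zero =>
      intro S
      rw [show ((0:ℕ) : WithTop ℕ∞) = 0 from rfl, contDiffOn_zero]
      obtain ⟨S', hS'⟩ := SS_hasDeriv g D hder S
      exact fun q hq => ((hS' q hq).differentiableAt).continuousAt.continuousWithinAt
  | succ n ih =>
      intro S
      obtain ⟨S', hS'⟩ := SS_hasDeriv g D hder S
      have hdiff : DifferentiableOn ℝ (SS g S) (Ioi (0:ℝ)) :=
        fun q hq => ((hS' q hq).differentiableAt).differentiableWithinAt
      rw [show (((n+1:ℕ)) : WithTop ℕ∞) = (n : WithTop ℕ∞) + 1 by push_cast; rfl,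
        contDiffOn_succ_iff_deriv_of_isOpen isOpen_Ioi]
      refine ⟨hdiff, ?_, ?_⟩
      · intro h; exact absurd h (by simp)
      · apply (((ih S').neg).congr)
        intro q hq
        exact ((hS' q hq).deriv)

include hder in
lemma SS_iterated (n : ℕ) : ∀ S : Multiset (Multiset ι),
    ∃ S' : Multiset (Multiset ι), Set.EqOn
      (iteratedDerivWithin n (SS g S) (Ioi (0:ℝ)))
      (fun q => (-1:ℝ)^n * SS g S' q) (Ioi (0:ℝ)) := by
  induction n with
  | zero =>
      intro S
      exact ⟨S, by intro q hq; simp [iteratedDerivWithin_zero]⟩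
  | succ n ih =>
      intro S
      obtain ⟨S', hS'⟩ := ih S
      obtain ⟨S'', hS''⟩ := SS_hasDeriv g D hder S'
      refine ⟨S'', fun q hq => ?_⟩
      rw [iteratedDerivWithin_succ,
        derivWithin_of_isOpen isOpen_Ioi hq]
      have hev : iteratedDerivWithin n (SS g S) (Ioi (0:ℝ)) =ᶠ[nhds q]
          (fun q => (-1:ℝ)^n * SS g S' q) := by
        filter_upwards [isOpen_Ioi.mem_nhds hq] with y hy using hS' hy
      rw [hev.deriv_eq]
      have : HasDerivAt (fun q => (-1:ℝ)^n * SS g S' q)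
          ((-1:ℝ)^n * (-(SS g S'' q))) q := (hS'' q hq).const_mul _
      rw [this.deriv]
      ring

include hpos hder in
/-- Any function agreeing with a generator sum on `(0,∞)` is completely monotone. -/
lemma isCM_of_SS (f : ℝ → ℝ) (S : Multiset (Multiset ι))
    (hf : Set.EqOn f (SS g S) (Ioi (0:ℝ))) :
    ContDiffOn ℝ (⊤ : ℕ∞) f (Ioi (0:ℝ)) ∧
    ∀ n : ℕ, ∀ q > (0:ℝ), 0 ≤ (-1:ℝ)^n * iteratedDerivWithin n f (Ioi 0) q := by
  constructor
  · rw [show ((⊤ : ℕ∞) : WithTop ℕ∞) = (⊤ : ℕ∞) from rfl, contDiffOn_infty]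
    exact fun n => (SS_contDiffOn g D hder n S).congr hf
  · intro n q hq
    have hcongr := iteratedDerivWithin_congr (𝕜 := ℝ)
        (f := f) (g := SS g S) (n := n) hf hq
    obtain ⟨S', hS'⟩ := SS_iterated g D hder n S
    rw [hcongr, hS' hq, ← mul_assoc, ← mul_pow]
    simp only [neg_mul_neg, one_mul, one_pow]
    exact SS_nonneg g hpos S' q hq

include hpos hder in
/-- Any nonnegative function whose derivative on `(0,∞)` is a generator sum is Bernstein. -/
lemma isBernstein_of_SS (f : ℝ → ℝ) (S : Multiset (Multiset ι))
    (hf0 : ∀ q > (0:ℝ), 0 ≤ f q)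
    (hfd : ∀ q ∈ Ioi (0:ℝ), HasDerivAt f (SS g S q) q) :
    ContDiffOn ℝ (⊤ : ℕ∞) f (Ioi (0:ℝ)) ∧ (∀ q > (0:ℝ), 0 ≤ f q) ∧
    ∀ n : ℕ, 1 ≤ n → ∀ q > (0:ℝ),
      0 ≤ (-1:ℝ)^(n-1) * iteratedDerivWithin n f (Ioi 0) q := by
  have hdW : Set.EqOn (derivWithin f (Ioi (0:ℝ))) (SS g S) (Ioi (0:ℝ)) := by
    intro q hq
    rw [derivWithin_of_isOpen isOpen_Ioi hq, (hfd q hq).deriv]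
  refine ⟨?_, hf0, ?_⟩
  · rw [show ((⊤ : ℕ∞) : WithTop ℕ∞) = (⊤ : ℕ∞) from rfl, contDiffOn_infty]
    intro n
    induction n with
    | zero =>
        rw [show ((0:ℕ) : WithTop ℕ∞) = 0 from rfl, contDiffOn_zero]
        exact fun q hq => ((hfd q hq).differentiableAt).continuousAt.continuousWithinAt
    | succ n _ =>
        rw [show (((n+1:ℕ)) : WithTop ℕ∞) = (n : WithTop ℕ∞) + 1 by push_cast; rfl,
          contDiffOn_succ_iff_derivWithin (uniqueDiffOn_Ioi 0)]
        refine ⟨fun q hq => ((hfd q hq).differentiableAt).differentiableWithinAt, ?_, ?_⟩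
        · intro h; exact absurd h (by simp)
        · exact (SS_contDiffOn g D hder n S).congr hdW
  · rintro n hn q hq
    obtain ⟨m, rfl⟩ : ∃ m, n = m + 1 := ⟨n - 1, (Nat.succ_pred_eq_of_pos hn).symm⟩
    rw [iteratedDerivWithin_succ']
    have hcongr := iteratedDerivWithin_congr (𝕜 := ℝ)
        (f := derivWithin f (Ioi (0:ℝ))) (g := SS g S) (n := m) hdW hq
    obtain ⟨S', hS'⟩ := SS_iterated g D hder m S
    rw [hcongr, hS' hq]
    simp only [Nat.add_sub_cancel, ← mul_assoc, ← mul_pow]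
    simp only [neg_mul_neg, one_mul, one_pow]
    exact SS_nonneg g hpos S' q hq



/-! ### Pure inequalities -/

lemma exp_term_nonneg (t : ℝ) : 0 ≤ exp (-t) - 1 + t := by
  have := Real.add_one_le_exp (-t)
  linarith

lemma exp_term_le_sq {t : ℝ} (ht : 0 ≤ t) : exp (-t) - 1 + t ≤ t^2 := by
  have h1 : 1 + t ≤ exp t := by linarith [Real.add_one_le_exp t]
  have h2 : exp (-t) = (exp t)⁻¹ := by rw [Real.exp_neg]
  have h3 : 0 < exp t := Real.exp_pos t
  have h4 : (exp t)⁻¹ ≤ (1+t)⁻¹ := by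
    apply inv_anti₀ (by linarith) h1
  have h5 : exp (-t) - 1 + t ≤ (1+t)⁻¹ - 1 + t := by rw [h2]; linarith
  have h6 : (1+t)⁻¹ - 1 + t = t^2/(1+t) := by
    field_simp
    ring
  have h7 : t^2/(1+t) ≤ t^2 := by
    apply div_le_self (sq_nonneg t) (by linarith)
  linarith

lemma one_sub_exp_le (t : ℝ) : 1 - exp (-t) ≤ t := by
  have := Real.add_one_le_exp (-t); linarith

lemma one_sub_exp_nonneg {t : ℝ} (ht : 0 ≤ t) : 0 ≤ 1 - exp (-t) := by
  have : exp (-t) ≤ exp 0 := Real.exp_le_exp.2 (by linarith)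
  simpa using this

lemma one_sub_exp_le_one {t : ℝ} (ht : 0 ≤ t) : 1 - exp (-t) ≤ 1 := by
  have : 0 ≤ exp (-t) := (Real.exp_pos _).le
  linarith

lemma pow_mul_exp_le {c t : ℝ} (hc : 0 < c) (ht : 0 ≤ t) (k : ℕ) :
    t^k * exp (-(c*t)) ≤ k.factorial / c^k := by
  have h1 : (c*t)^k / k.factorial ≤ exp (c*t) :=
    Real.pow_div_factorial_le_exp (c*t) (mul_nonneg hc.le ht) k
  have h3 : (0:ℝ) < exp (c*t) := Real.exp_pos _
  have h5 : (c*t)^k ≤ exp (c*t) * k.factorial :=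
    (div_le_iff₀ (by positivity)).1 h1
  rw [le_div_iff₀ (pow_pos hc k), Real.exp_neg]
  have h6 : t^k * (exp (c*t))⁻¹ * c^k = (c*t)^k * (exp (c*t))⁻¹ := by
    rw [mul_pow]; ring
  rw [h6, mul_inv_le_iff₀ h3]
  linarith

/-! ### The kernels `Ik k p x = ∫_0^x u^k e^{-pu} du` -/

/-- `Ik k p x = ∫_0^x u^k e^{-pu} du`. -/
def Ik (k : ℕ) (p x : ℝ) : ℝ := ∫ u in (0:ℝ)..x, u^k * exp (-(p*u))

lemma Ik_cont_kernel (k : ℕ) (p : ℝ) : Continuous (fun u : ℝ => u^k * exp (-(p*u))) := by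
  continuity

lemma Ik_continuous (k : ℕ) (p : ℝ) : Continuous (fun x => Ik k p x) :=
  intervalIntegral.continuous_primitive
    (fun a b => ((Ik_cont_kernel k p).intervalIntegrable a b)) 0

lemma Ik_nonneg {k : ℕ} {p x : ℝ} (hx : 0 ≤ x) : 0 ≤ Ik k p x := by
  apply intervalIntegral.integral_nonneg hx
  intro u hu
  have : (0:ℝ) ≤ u := hu.1
  positivity

lemma exp_int_eq (c x : ℝ) (hc : c ≠ 0) :
    ∫ u in (0:ℝ)..x, exp (-(c*u)) = (1 - exp (-(c*x)))/c := by
  have hderiv : ∀ u ∈ uIcc (0:ℝ) x, HasDerivAt (fun u => -exp (-(c*u))/c) (exp (-(c*u))) u := by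
    intro u _
    have h1 : HasDerivAt (fun u : ℝ => -(c*u)) (-c) u := by
      simpa using ((hasDerivAt_id u).const_mul c).fun_neg
    have h2 := (h1.exp).fun_neg.div_const c
    exact h2.congr_deriv (by field_simp)
  rw [intervalIntegral.integral_eq_sub_of_hasDerivAt hderiv
    (((Ik_cont_kernel 0 c).congr (by intro u; simp)).intervalIntegrable 0 x)]
  simp only [mul_zero, neg_zero, Real.exp_zero]
  ring

lemma Ik_le_of_le_one {k : ℕ} {p x : ℝ} (hp : 0 < p) (hx0 : 0 ≤ x) (hx1 : x ≤ 1) :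
    Ik k p x ≤ x := by
  have h := intervalIntegral.integral_mono_on (μ := volume) hx0
    ((Ik_cont_kernel k p).intervalIntegrable 0 x)
    ((continuous_const (y := (1:ℝ))).intervalIntegrable 0 x)
    (fun u hu => by
      have hu0 : 0 ≤ u := hu.1
      have hu1 : u ≤ 1 := le_trans hu.2 hx1
      have h1 : u^k ≤ 1 := pow_le_one₀ hu0 hu1
      have h2 : exp (-(p*u)) ≤ 1 := by
        rw [Real.exp_le_one_iff]
        nlinarith
      calc u^k * exp (-(p*u)) ≤ 1 * 1 := by
            apply mul_le_mul h1 h2 (Real.exp_pos _).le zero_le_one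
        _ = 1 := by ring)
  simpa [Ik] using h

lemma Ik_succ_le_sq {k : ℕ} {p x : ℝ} (hp : 0 < p) (hx0 : 0 ≤ x) (hx1 : x ≤ 1) :
    Ik (k+1) p x ≤ x^2 := by
  have h := intervalIntegral.integral_mono_on (μ := volume) hx0
    ((Ik_cont_kernel (k+1) p).intervalIntegrable 0 x)
    (continuous_id.intervalIntegrable 0 x)
    (fun u hu => by
      have hu0 : 0 ≤ u := hu.1
      have hu1 : u ≤ 1 := le_trans hu.2 hx1
      have h1 : u^(k+1) ≤ u := by
        calc u^(k+1) = u^k * u := by ring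
          _ ≤ 1 * u := by
              apply mul_le_mul_of_nonneg_right (pow_le_one₀ hu0 hu1) hu0
          _ = u := one_mul u
      have h2 : exp (-(p*u)) ≤ 1 := by
        rw [Real.exp_le_one_iff]; nlinarith
      calc u^(k+1) * exp (-(p*u)) ≤ u * 1 :=
            mul_le_mul h1 h2 (Real.exp_pos _).le hu0
        _ = u := mul_one u)
  have h2 : ∫ u in (0:ℝ)..x, u = x^2/2 := by simp
  rw [Ik]
  calc (∫ u in (0:ℝ)..x, u^(k+1) * exp (-(p*u))) ≤ ∫ u in (0:ℝ)..x, id u := h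
    _ = x^2/2 := by simpa using h2
    _ ≤ x^2 := by nlinarith [sq_nonneg x]

lemma Ik_le_const {k : ℕ} {p x δ : ℝ} (hδ : 0 < δ) (hp : δ ≤ p) (hx0 : 0 ≤ x) :
    Ik k p x ≤ (k.factorial * (2/δ)^k) * (2/δ) := by
  have hhalf : 0 < δ/2 := by linarith
  have hmono : ∀ u ∈ Icc (0:ℝ) x, u^k * exp (-(p*u)) ≤
      (k.factorial * (2/δ)^k) * exp (-((δ/2)*u)) := by
    intro u hu
    have hu0 : 0 ≤ u := hu.1
    have h1 : exp (-(p*u)) ≤ exp (-(δ*u)) := by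
      apply Real.exp_le_exp.2
      nlinarith
    have h2 : exp (-(δ*u)) = exp (-((δ/2)*u)) * exp (-((δ/2)*u)) := by
      rw [← Real.exp_add]; ring_nf
    have h3 : u^k * exp (-((δ/2)*u)) ≤ k.factorial / (δ/2)^k :=
      pow_mul_exp_le hhalf hu0 k
    have h4 : (k.factorial : ℝ) / (δ/2)^k = k.factorial * (2/δ)^k := by
      rw [div_pow, div_pow, div_div_eq_mul_div, mul_div_assoc]
    calc u^k * exp (-(p*u)) ≤ u^k * exp (-(δ*u)) := by
          apply mul_le_mul_of_nonneg_left h1 (by positivity)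
      _ = (u^k * exp (-((δ/2)*u))) * exp (-((δ/2)*u)) := by rw [h2]; ring
      _ ≤ (k.factorial / (δ/2)^k) * exp (-((δ/2)*u)) := by
          apply mul_le_mul_of_nonneg_right h3 (Real.exp_pos _).le
      _ = (k.factorial * (2/δ)^k) * exp (-((δ/2)*u)) := by rw [h4]
  have hcont2 : Continuous (fun u : ℝ => ((k.factorial : ℝ) * (2/δ)^k) * exp (-((δ/2)*u))) := by
    continuity
  have h := intervalIntegral.integral_mono_on (μ := volume) hx0
    ((Ik_cont_kernel k p).intervalIntegrable 0 x)
    (hcont2.intervalIntegrable 0 x)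
    hmono
  rw [Ik]
  calc (∫ u in (0:ℝ)..x, u^k * exp (-(p*u)))
      ≤ ∫ u in (0:ℝ)..x, (k.factorial * (2/δ)^k) * exp (-((δ/2)*u)) := h
    _ = (k.factorial * (2/δ)^k) * ∫ u in (0:ℝ)..x, exp (-((δ/2)*u)) := by
        rw [intervalIntegral.integral_const_mul]
    _ = (k.factorial * (2/δ)^k) * ((1 - exp (-((δ/2)*x)))/(δ/2)) := by
        rw [exp_int_eq _ _ (ne_of_gt hhalf)]
    _ ≤ (k.factorial * (2/δ)^k) * (2/δ) := by
        apply mul_le_mul_of_nonneg_left _ (by positivity)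
        have h5 : 0 ≤ exp (-((δ/2)*x)) := (Real.exp_pos _).le
        rw [div_le_div_iff₀ hhalf hδ]
        nlinarith
  
lemma Ik_hasDeriv (k : ℕ) {p : ℝ} (x : ℝ) (hp : 0 < p) (hx : 0 < x) :
    HasDerivAt (fun p => Ik k p x) (-(Ik (k+1) p x)) p := by
  have hball : ∀ p' ∈ Metric.ball p (p/2), 0 < p' := by
    intro p' hp'
    rw [Metric.mem_ball, Real.dist_eq, abs_lt] at hp'
    linarith [hp'.1]
  have key := intervalIntegral.hasDerivAt_integral_of_dominated_loc_of_deriv_le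
    (F := fun p u => u^k * exp (-(p*u)))
    (F' := fun p u => -(u^(k+1) * exp (-(p*u))))
    (bound := fun _ => x^(k+1))
    (μ := volume) (a := 0) (b := x) (x₀ := p)
    (Metric.ball_mem_nhds p (half_pos hp))
    (Filter.Eventually.of_forall fun p' =>
      ((Ik_cont_kernel k p').aestronglyMeasurable).restrict)
    ((Ik_cont_kernel k p).intervalIntegrable 0 x)
    ((((Ik_cont_kernel (k+1) p).neg).aestronglyMeasurable).restrict)
    (by
      apply Filter.Eventually.of_forall
      intro u hu p' hp'
      have hu' : u ∈ Ioc 0 x := by rwa [Set.uIoc_of_le hx.le] at hu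
      have hu0 : 0 < u := hu'.1
      have hux : u ≤ x := hu'.2
      have hp'0 : 0 < p' := hball p' hp'
      have h2 : exp (-(p'*u)) ≤ 1 := by
        rw [Real.exp_le_one_iff]; nlinarith
      have h3 : u^(k+1) ≤ x^(k+1) := pow_le_pow_left₀ hu0.le hux _
      rw [norm_neg, Real.norm_eq_abs, abs_of_nonneg (by positivity)]
      calc u^(k+1) * exp (-(p'*u)) ≤ x^(k+1) * 1 :=
            mul_le_mul h3 h2 (Real.exp_pos _).le (by positivity)
        _ = x^(k+1) := mul_one _
      )
    (intervalIntegrable_const)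
    (by
      apply Filter.Eventually.of_forall
      intro u _ p' _
      have h1 : HasDerivAt (fun p : ℝ => -(p*u)) (-u) p' := by
        simpa using ((hasDerivAt_id p').mul_const u).fun_neg
      have h2 := (h1.exp).const_mul (u^k)
      exact h2.congr_deriv (by ring))
  have h2 := key.2
  have h3 : (∫ u in (0:ℝ)..x, -(u^(k+1) * exp (-(p*u)))) = -(Ik (k+1) p x) := by
    rw [intervalIntegral.integral_neg]; rfl
  rw [h3] at h2
  exact h2

/-! ### Closed forms -/

lemma Ik0_eq {p : ℝ} (hp : p ≠ 0) (x : ℝ) : Ik 0 p x = (1 - exp (-(p*x)))/p := by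
  rw [Ik]
  simp only [pow_zero, one_mul]
  exact exp_int_eq p x hp

lemma Ik1_eq {p : ℝ} (hp : p ≠ 0) (x : ℝ) :
    Ik 1 p x = (1 - (1+p*x) * exp (-(p*x)))/p^2 := by
  have hderiv : ∀ u ∈ uIcc (0:ℝ) x,
      HasDerivAt (fun u => (-(u/p) - (p^2)⁻¹) * exp (-(p*u))) (u^1 * exp (-(p*u))) u := by
    intro u _
    have h1 : HasDerivAt (fun u : ℝ => -(u/p) - (p^2)⁻¹) (-(1/p)) u := by
      simpa [one_div] using (((hasDerivAt_id u).div_const p).neg.sub_const ((p^2)⁻¹))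
    have h2 : HasDerivAt (fun u : ℝ => -(p*u)) (-p) u := by
      simpa using ((hasDerivAt_id u).const_mul p).fun_neg
    have h3 := h1.mul h2.exp
    refine h3.congr_deriv ?_
    field_simp
    ring
  rw [Ik, intervalIntegral.integral_eq_sub_of_hasDerivAt hderiv
    ((Ik_cont_kernel 1 p).intervalIntegrable 0 x)]
  have h0 : (0:ℝ)/p = 0 := by simp
  field_simp
  ring_nf
  rw [Real.exp_zero]
  ring

/-! ### Integrals against the Lévy measure -/

variable {Pi : Measure ℝ}

/-- `F0 p = ∫ (e^{-px} - 1 + px) dΠ`. -/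
def F0 (Pi : Measure ℝ) (p : ℝ) : ℝ := ∫ x, (exp (-(p*x)) - 1 + p*x) ∂Pi

/-- `F1 p = ∫ x(1 - e^{-px}) dΠ`. -/
def F1 (Pi : Measure ℝ) (p : ℝ) : ℝ := ∫ x, x*(1 - exp (-(p*x))) ∂Pi

/-- `chi k p = ∫ x^k e^{-px} dΠ`. -/
def chi (Pi : Measure ℝ) (k : ℕ) (p : ℝ) : ℝ := ∫ x, x^k * exp (-(p*x)) ∂Pi

/-- `Ga k p = ∫ x · Ik k p x dΠ`. -/
def Ga (Pi : Measure ℝ) (k : ℕ) (p : ℝ) : ℝ := ∫ x, x * Ik k p x ∂Pi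

/-- `Ta k p = ∫ Ik (k+1) p x dΠ`. -/
def Ta (Pi : Measure ℝ) (k : ℕ) (p : ℝ) : ℝ := ∫ x, Ik (k+1) p x ∂Pi

/-- `psi1` will be the derivative of the branching mechanism. -/
def psi1 (aa bb : ℝ) (Pi : Measure ℝ) (p : ℝ) : ℝ := aa + 2*bb*p + F1 Pi p

section MeasureFacts

variable (hPi0 : Pi (Iic 0) = 0)
variable (hfin : (∫⁻ x, ENNReal.ofReal (min x (x ^ 2)) ∂Pi) < ⊤)

include hPi0 in
lemma ae_pos : ∀ᵐ x ∂Pi, 0 < x := by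
  rw [ae_iff]
  have : {x : ℝ | ¬ 0 < x} = Iic 0 := by ext x; simp [not_lt]
  rw [this]
  exact hPi0

include hPi0 hfin in
lemma integrable_min : Integrable (fun x => min x (x^2)) Pi := by
  constructor
  · exact (continuous_id.min (continuous_pow 2)).aestronglyMeasurable
  · rw [hasFiniteIntegral_iff_ofReal (by
      filter_upwards [ae_pos hPi0] with x hx
      exact le_min hx.le (by positivity))]
    exact hfin

include hPi0 hfin in
lemma integrable_bound {f : ℝ → ℝ} {C : ℝ}
    (hmeas : AEStronglyMeasurable f Pi)
    (hb : ∀ x, 0 < x → |f x| ≤ C * min x (x^2)) : Integrable f Pi := by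
  apply Integrable.mono' ((integrable_min hPi0 hfin).const_mul C) hmeas
  filter_upwards [ae_pos hPi0] with x hx
  simpa [Real.norm_eq_abs] using hb x hx

lemma ball_facts {p₀ p : ℝ} (hp₀ : 0 < p₀) (hp : p ∈ Metric.ball p₀ (p₀/2)) :
    p₀/2 ≤ p ∧ p ≤ 2*p₀ := by
  rw [Metric.mem_ball, Real.dist_eq, abs_lt] at hp
  constructor <;> linarith [hp.1, hp.2]

include hPi0 hfin in
/-- Differentiation under the integral sign against `Pi`, with the standard domination. -/
lemma param_hasDeriv {f f' : ℝ → ℝ → ℝ} {p₀ C : ℝ} (hp₀ : 0 < p₀) (hC : 0 ≤ C)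
    (hmeas : ∀ p ∈ Metric.ball p₀ (p₀/2), AEStronglyMeasurable (f p) Pi)
    (hmeas' : AEStronglyMeasurable (f' p₀) Pi)
    (hint : Integrable (f p₀) Pi)
    (hbound : ∀ x, 0 < x → ∀ p ∈ Metric.ball p₀ (p₀/2), |f' p x| ≤ C * min x (x^2))
    (hdiff : ∀ x, 0 < x → ∀ p ∈ Metric.ball p₀ (p₀/2),
      HasDerivAt (fun p => f p x) (f' p x) p) :
    HasDerivAt (fun p => ∫ x, f p x ∂Pi) (∫ x, f' p₀ x ∂Pi) p₀ := by
  have key := hasDerivAt_integral_of_dominated_loc_of_deriv_le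
    (μ := Pi) (F := f) (F' := f') (x₀ := p₀)
    (bound := fun x => C * min x (x^2))
    (Metric.ball_mem_nhds p₀ (half_pos hp₀))
    (Filter.eventually_of_mem (Metric.ball_mem_nhds p₀ (half_pos hp₀)) hmeas)
    hint hmeas'
    (by
      filter_upwards [ae_pos hPi0] with x hx
      intro p hp
      simpa [Real.norm_eq_abs] using hbound x hx p hp)
    ((integrable_min hPi0 hfin).const_mul C)
    (by
      filter_upwards [ae_pos hPi0] with x hx
      intro p hp
      exact hdiff x hx p hp)
  exact key.2

/-! Bounds on the various kernels. -/

lemma min_eq_sq {x : ℝ} (h0 : 0 < x) (h1 : x ≤ 1) : min x (x^2) = x^2 :=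
  min_eq_right (by nlinarith)

lemma min_eq_lin {x : ℝ} (h1 : 1 ≤ x) : min x (x^2) = x :=
  min_eq_left (by nlinarith)

lemma bound_F0 {x p P : ℝ} (hx : 0 < x) (hp : 0 < p) (hP : p ≤ P) :
    |exp (-(p*x)) - 1 + p*x| ≤ (P + P^2) * min x (x^2) := by
  have hP0 : 0 < P := lt_of_lt_of_le hp hP
  rw [abs_of_nonneg (exp_term_nonneg (p*x))]
  rcases le_or_gt x 1 with h1 | h1
  · rw [min_eq_sq hx h1]
    have := exp_term_le_sq (t := p*x) (by positivity)
    have hpP : p^2 ≤ P^2 := by nlinarith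
    have h2 : (p*x)^2 ≤ P^2 * x^2 := by
      calc (p*x)^2 = p^2 * x^2 := by ring
        _ ≤ P^2 * x^2 := by nlinarith [sq_nonneg x]
    nlinarith [sq_nonneg x]
  · rw [min_eq_lin h1.le]
    have h3 : exp (-(p*x)) ≤ 1 := by
      rw [Real.exp_le_one_iff]; nlinarith
    nlinarith
 
lemma bound_F1 {x p P : ℝ} (hx : 0 < x) (hp : 0 < p) (hP : p ≤ P) :
    |x * (1 - exp (-(p*x)))| ≤ (1 + P) * min x (x^2) := by
  have hP0 : 0 < P := lt_of_lt_of_le hp hP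
  have hn : 0 ≤ 1 - exp (-(p*x)) := one_sub_exp_nonneg (by positivity)
  rw [abs_of_nonneg (by positivity)]
  rcases le_or_gt x 1 with h1 | h1
  · rw [min_eq_sq hx h1]
    have h2 : 1 - exp (-(p*x)) ≤ p*x := one_sub_exp_le (p*x)
    nlinarith
  · rw [min_eq_lin h1.le]
    have h2 : 1 - exp (-(p*x)) ≤ 1 := one_sub_exp_le_one (by positivity)
    nlinarith

lemma bound_chi {x p δ : ℝ} (k : ℕ) (hx : 0 < x) (hδ : 0 < δ) (hp : δ ≤ p) :
    |x^(k+2) * exp (-(p*x))| ≤ (1 + (k+1).factorial/δ^(k+1)) * min x (x^2) := by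
  have hp0 : 0 < p := lt_of_lt_of_le hδ hp
  have hfac : (0:ℝ) < (k+1).factorial / δ^(k+1) := by positivity
  rw [abs_of_nonneg (by positivity)]
  rcases le_or_gt x 1 with h1 | h1
  · rw [min_eq_sq hx h1]
    have h2 : x^(k+2) ≤ x^2 := pow_le_pow_of_le_one hx.le h1 (by omega)
    have h3 : exp (-(p*x)) ≤ 1 := by rw [Real.exp_le_one_iff]; nlinarith
    nlinarith [pow_pos hx 2, pow_pos hx (k+2), Real.exp_pos (-(p*x))]
  · rw [min_eq_lin h1.le]
    have h4 : exp (-(p*x)) ≤ exp (-(δ*x)) := by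
      apply Real.exp_le_exp.2; nlinarith
    have h5 : x^(k+1) * exp (-(δ*x)) ≤ (k+1).factorial / δ^(k+1) :=
      pow_mul_exp_le hδ hx.le (k+1)
    have h6 : x^(k+2) * exp (-(p*x)) = x * (x^(k+1) * exp (-(p*x))) := by ring
    rw [h6]
    have h7 : x^(k+1) * exp (-(p*x)) ≤ x^(k+1) * exp (-(δ*x)) := by
      apply mul_le_mul_of_nonneg_left h4 (by positivity)
    nlinarith

lemma bound_Ga {x p δ : ℝ} (k : ℕ) (hx : 0 < x) (hδ : 0 < δ) (hp : δ ≤ p) :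
    |x * Ik k p x| ≤ (1 + (k.factorial * (2/δ)^k) * (2/δ)) * min x (x^2) := by
  have hp0 : 0 < p := lt_of_lt_of_le hδ hp
  have hIk : 0 ≤ Ik k p x := Ik_nonneg hx.le
  have hc : (0:ℝ) ≤ (k.factorial * (2/δ)^k) * (2/δ) := by positivity
  rw [abs_of_nonneg (by positivity)]
  rcases le_or_gt x 1 with h1 | h1
  · rw [min_eq_sq hx h1]
    have h2 : Ik k p x ≤ x := Ik_le_of_le_one hp0 hx.le h1
    nlinarith
  · rw [min_eq_lin h1.le]
    have h2 : Ik k p x ≤ (k.factorial * (2/δ)^k) * (2/δ) := Ik_le_const hδ hp hx.le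
    nlinarith

lemma bound_Ta {x p δ : ℝ} (k : ℕ) (hx : 0 < x) (hδ : 0 < δ) (hp : δ ≤ p) :
    |Ik (k+1) p x| ≤ (1 + ((k+1).factorial * (2/δ)^(k+1)) * (2/δ)) * min x (x^2) := by
  have hp0 : 0 < p := lt_of_lt_of_le hδ hp
  have hIk : 0 ≤ Ik (k+1) p x := Ik_nonneg hx.le
  have hc : (0:ℝ) ≤ ((k+1).factorial * (2/δ)^(k+1)) * (2/δ) := by positivity
  rw [abs_of_nonneg hIk]
  rcases le_or_gt x 1 with h1 | h1
  · rw [min_eq_sq hx h1]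
    have h2 : Ik (k+1) p x ≤ x^2 := Ik_succ_le_sq hp0 hx.le h1
    nlinarith
  · rw [min_eq_lin h1.le]
    have h2 : Ik (k+1) p x ≤ ((k+1).factorial * (2/δ)^(k+1)) * (2/δ) :=
      Ik_le_const hδ hp hx.le
    nlinarith

/-! ### Derivatives of the measure integrals -/

lemma hasDerivAt_exp_neg (x p : ℝ) :
    HasDerivAt (fun p : ℝ => exp (-(p*x))) (exp (-(p*x)) * (-x)) p := by
  have h1 : HasDerivAt (fun p : ℝ => -(p*x)) (-x) p := by
    simpa using ((hasDerivAt_id p).mul_const x).fun_neg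
  exact h1.exp

include hPi0 hfin in
lemma F0_hasDeriv {p : ℝ} (hp : 0 < p) : HasDerivAt (F0 Pi) (F1 Pi p) p := by
  have key := param_hasDeriv hPi0 hfin (p₀ := p) (C := 1 + 2*p)
    (f := fun p x => exp (-(p*x)) - 1 + p*x)
    (f' := fun p x => x * (1 - exp (-(p*x))))
    hp (by positivity)
    (fun p' _ => Continuous.aestronglyMeasurable (by continuity))
    (Continuous.aestronglyMeasurable (by continuity))
    (integrable_bound hPi0 hfin (Continuous.aestronglyMeasurable (by continuity))
      (fun x hx => bound_F0 hx hp le_rfl))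
    (fun x hx p' hp' => by
      have hf := ball_facts hp hp'
      have hp'0 : 0 < p' := lt_of_lt_of_le (half_pos hp) hf.1
      exact bound_F1 hx hp'0 hf.2)
    (fun x hx p' hp' => by
      have h := ((hasDerivAt_exp_neg x p').sub_const 1).fun_add ((hasDerivAt_id p').mul_const x)
      exact h.congr_deriv (by ring))
  exact key

include hPi0 hfin in
lemma F1_hasDeriv {p : ℝ} (hp : 0 < p) : HasDerivAt (F1 Pi) (chi Pi 2 p) p := by
  have key := param_hasDeriv hPi0 hfin (p₀ := p)
    (C := 1 + (Nat.factorial 1) / (p/2)^1)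
    (f := fun p x => x * (1 - exp (-(p*x))))
    (f' := fun p x => x^2 * exp (-(p*x)))
    hp (by positivity)
    (fun p' _ => Continuous.aestronglyMeasurable (by continuity))
    (Continuous.aestronglyMeasurable (by continuity))
    (integrable_bound hPi0 hfin (Continuous.aestronglyMeasurable (by continuity))
      (fun x hx => bound_F1 hx hp le_rfl))
    (fun x hx p' hp' => by
      have hf := ball_facts hp hp'
      simpa using bound_chi (k := 0) hx (half_pos hp) hf.1)
    (fun x hx p' hp' => by
      have h := ((hasDerivAt_exp_neg x p').const_sub 1).const_mul x
      exact h.congr_deriv (by ring))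
  exact key

include hPi0 hfin in
lemma chi_hasDeriv (k : ℕ) {p : ℝ} (hp : 0 < p) :
    HasDerivAt (chi Pi (k+2)) (-(chi Pi (k+3) p)) p := by
  have key := param_hasDeriv hPi0 hfin (p₀ := p)
    (C := 1 + (Nat.factorial (k+2)) / (p/2)^(k+2))
    (f := fun p x => x^(k+2) * exp (-(p*x)))
    (f' := fun p x => -(x^(k+3) * exp (-(p*x))))
    hp (by positivity)
    (fun p' _ => Continuous.aestronglyMeasurable (by continuity))
    (Continuous.aestronglyMeasurable (by continuity))
    (integrable_bound hPi0 hfin (Continuous.aestronglyMeasurable (by continuity))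
      (fun x hx => bound_chi k hx hp le_rfl))
    (fun x hx p' hp' => by
      have hf := ball_facts hp hp'
      rw [abs_neg]
      exact bound_chi (k := k+1) hx (half_pos hp) hf.1)
    (fun x hx p' hp' => by
      have h := (hasDerivAt_exp_neg x p').const_mul (x^(k+2))
      exact h.congr_deriv (by ring))
  have h3 : (∫ x, -(x^(k+3) * exp (-(p*x))) ∂Pi) = -(chi Pi (k+3) p) := by
    rw [MeasureTheory.integral_neg]; rfl
  rw [h3] at key
  exact key

include hPi0 hfin in
lemma Ga_hasDeriv (k : ℕ) {p : ℝ} (hp : 0 < p) :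
    HasDerivAt (Ga Pi k) (-(Ga Pi (k+1) p)) p := by
  have key := param_hasDeriv hPi0 hfin (p₀ := p)
    (C := 1 + ((Nat.factorial (k+1)) * (2/(p/2))^(k+1)) * (2/(p/2)))
    (f := fun p x => x * Ik k p x)
    (f' := fun p x => -(x * Ik (k+1) p x))
    hp (by positivity)
    (fun p' _ => (continuous_id.mul (Ik_continuous k p')).aestronglyMeasurable)
    ((continuous_id.mul (Ik_continuous (k+1) p)).neg.aestronglyMeasurable)
    (integrable_bound hPi0 hfin
      ((continuous_id.mul (Ik_continuous k p)).aestronglyMeasurable)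
      (fun x hx => bound_Ga k hx hp le_rfl))
    (fun x hx p' hp' => by
      have hf := ball_facts hp hp'
      rw [abs_neg]
      exact bound_Ga (k+1) hx (half_pos hp) hf.1)
    (fun x hx p' hp' => by
      have hf := ball_facts hp hp'
      have hp'0 : 0 < p' := lt_of_lt_of_le (half_pos hp) hf.1
      have h := (Ik_hasDeriv k x hp'0 hx).const_mul x
      exact h.congr_deriv (by ring))
  have h3 : (∫ x, -(x * Ik (k+1) p x) ∂Pi) = -(Ga Pi (k+1) p) := by
    rw [MeasureTheory.integral_neg]; rfl
  rw [h3] at key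
  exact key

include hPi0 hfin in
lemma Ta_hasDeriv (k : ℕ) {p : ℝ} (hp : 0 < p) :
    HasDerivAt (Ta Pi k) (-(Ta Pi (k+1) p)) p := by
  have key := param_hasDeriv hPi0 hfin (p₀ := p)
    (C := 1 + ((Nat.factorial (k+2)) * (2/(p/2))^(k+2)) * (2/(p/2)))
    (f := fun p x => Ik (k+1) p x)
    (f' := fun p x => -(Ik (k+2) p x))
    hp (by positivity)
    (fun p' _ => (Ik_continuous (k+1) p').aestronglyMeasurable)
    ((Ik_continuous (k+2) p).neg.aestronglyMeasurable)
    (integrable_bound hPi0 hfin ((Ik_continuous (k+1) p).aestronglyMeasurable)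
      (fun x hx => bound_Ta k hx hp le_rfl))
    (fun x hx p' hp' => by
      have hf := ball_facts hp hp'
      rw [abs_neg]
      exact bound_Ta (k+1) hx (half_pos hp) hf.1)
    (fun x hx p' hp' => by
      have hf := ball_facts hp hp'
      have hp'0 : 0 < p' := lt_of_lt_of_le (half_pos hp) hf.1
      exact Ik_hasDeriv (k+1) x hp'0 hx)
  have h3 : (∫ x, -(Ik (k+2) p x) ∂Pi) = -(Ta Pi (k+1) p) := by
    rw [MeasureTheory.integral_neg]; rfl
  rw [h3] at key
  exact key

/-! ### Nonnegativity -/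

lemma F0_nonneg (p : ℝ) : 0 ≤ F0 Pi p :=
  integral_nonneg fun x => exp_term_nonneg (p*x)

include hPi0 in
lemma F1_nonneg {p : ℝ} (hp : 0 < p) : 0 ≤ F1 Pi p := by
  apply MeasureTheory.integral_nonneg_of_ae
  filter_upwards [ae_pos hPi0] with x hx
  have := one_sub_exp_nonneg (t := p*x) (by positivity)
  positivity

include hPi0 in
lemma chi_nonneg (k : ℕ) (p : ℝ) : 0 ≤ chi Pi k p := by
  apply MeasureTheory.integral_nonneg_of_ae
  filter_upwards [ae_pos hPi0] with x hx
  positivity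

include hPi0 in
lemma Ga_nonneg (k : ℕ) (p : ℝ) : 0 ≤ Ga Pi k p := by
  apply MeasureTheory.integral_nonneg_of_ae
  filter_upwards [ae_pos hPi0] with x hx
  have := Ik_nonneg (k := k) (p := p) hx.le
  positivity

include hPi0 in
lemma Ta_nonneg (k : ℕ) (p : ℝ) : 0 ≤ Ta Pi k p := by
  apply MeasureTheory.integral_nonneg_of_ae
  filter_upwards [ae_pos hPi0] with x hx
  exact Ik_nonneg hx.le

/-! ### Identities -/

lemma F1_eq_Ga {p : ℝ} (hp : 0 < p) : F1 Pi p = p * Ga Pi 0 p := by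
  have heq : (fun x => x * (1 - exp (-(p*x)))) = fun x => p * (x * Ik 0 p x) := by
    funext x
    rw [Ik0_eq hp.ne']
    field_simp
  rw [F1, heq, MeasureTheory.integral_const_mul, Ga]

include hPi0 hfin in
lemma key_sub {p : ℝ} (hp : 0 < p) : p * F1 Pi p - F0 Pi p = p^2 * Ta Pi 0 p := by
  have hInt1 : Integrable (fun x => x * (1 - exp (-(p*x)))) Pi :=
    integrable_bound hPi0 hfin (Continuous.aestronglyMeasurable (by continuity))
      (fun x hx => bound_F1 hx hp le_rfl)
  have hInt0 : Integrable (fun x => exp (-(p*x)) - 1 + p*x) Pi :=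
    integrable_bound hPi0 hfin (Continuous.aestronglyMeasurable (by continuity))
      (fun x hx => bound_F0 hx hp le_rfl)
  have heq : (fun x => p * (x * (1 - exp (-(p*x)))) - (exp (-(p*x)) - 1 + p*x))
      = fun x => p^2 * Ik 1 p x := by
    funext x
    rw [Ik1_eq hp.ne']
    field_simp
    ring
  calc p * F1 Pi p - F0 Pi p
      = ∫ x, (p * (x * (1 - exp (-(p*x)))) - (exp (-(p*x)) - 1 + p*x)) ∂Pi := by
        rw [F1, F0, ← MeasureTheory.integral_const_mul, ← integral_sub (hInt1.const_mul p) hInt0]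
    _ = ∫ x, p^2 * Ik 1 p x ∂Pi := by rw [heq]
    _ = p^2 * Ta Pi 0 p := by rw [MeasureTheory.integral_const_mul]; rfl

include hPi0 hfin in
lemma psi1_hasDeriv (aa bb : ℝ) {p : ℝ} (hp : 0 < p) :
    HasDerivAt (psi1 aa bb Pi) (2*bb + chi Pi 2 p) p := by
  have h1 : HasDerivAt (fun p : ℝ => aa + 2*bb*p) (2*bb) p := by
    simpa using ((hasDerivAt_id p).const_mul (2*bb)).const_add aa
  have h2 := h1.add (F1_hasDeriv hPi0 hfin hp)
  exact h2

end MeasureFacts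


/-! ### Generators -/

inductive Gen where
  | z | c2 | ca | cb | w | v
  | xi (k : ℕ) | ga (k : ℕ) | ta (k : ℕ)

/-- Interpretation of the generators. -/
def genF (aa bb : ℝ) (Pi : Measure ℝ) (Φ : ℝ → ℝ) : Gen → ℝ → ℝ
  | .z => fun _ => 0
  | .c2 => fun _ => 2
  | .ca => fun _ => aa
  | .cb => fun _ => bb
  | .w => fun q => (psi1 aa bb Pi (Φ q))⁻¹
  | .v => fun q => (Φ q)⁻¹
  | .xi k => fun q => chi Pi (k+2) (Φ q)
  | .ga k => fun q => Ga Pi k (Φ q)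
  | .ta k => fun q => Ta Pi k (Φ q)

/-- Formal derivative structure of the generators. -/
def genD : Gen → Multiset (Multiset Gen)
  | .z => {{Gen.z}}
  | .c2 => {{Gen.z}}
  | .ca => {{Gen.z}}
  | .cb => {{Gen.z}}
  | .w => {{Gen.c2, Gen.cb, Gen.w, Gen.w, Gen.w}, {Gen.xi 0, Gen.w, Gen.w, Gen.w}}
  | .v => {{Gen.w, Gen.v, Gen.v}}
  | .xi k => {{Gen.xi (k+1), Gen.w}}
  | .ga k => {{Gen.ga (k+1), Gen.w}}
  | .ta k => {{Gen.ta (k+1), Gen.w}}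

end BranchAux

section MainProof

open BranchAux

lemma hda_congr {f : ℝ → ℝ} {d d' q : ℝ} (h : HasDerivAt f d q) (he : d' = d) :
    HasDerivAt f d' q := by rwa [he]

/-- Let `Ψ` be a nonzero (sub)critical branching mechanism, a strictly
increasing bijection of `(0,∞)` onto itself, with inverse `Φ`.  Then `1/Φ'` and
`q ↦ q/Φ(q)` are Bernstein functions, and `q ↦ 1/(Φ(q) Φ'(q))` is completely
monotone. -/
theorem inverse_of_branching_properties
    (Ψ : ℝ → ℝ) (hΨ : IsBranchingMechanism Ψ)
    (hΨne : ¬ (∀ q > (0:ℝ), Ψ q = 0))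
    (Φ : ℝ → ℝ) (hΦpos : ∀ q > (0:ℝ), 0 < Φ q)
    (hΦinv : ∀ q > (0:ℝ), Ψ (Φ q) = q)
    (hinvΦ : ∀ q > (0:ℝ), Φ (Ψ q) = q) :
    IsBernstein (fun q => 1 / deriv Φ q) ∧
    IsBernstein (fun q => q / Φ q) ∧
    IsCompletelyMonotone (fun q => 1 / (Φ q * deriv Φ q)) := by
  classical
  obtain ⟨aa, bb, Pi, ha, hb, hPi0, hfin, hΨeq⟩ := hΨ
  have hΨeq' : ∀ q > (0:ℝ), Ψ q = aa*q + bb*q^2 + F0 Pi q := by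
    intro q hq
    rw [hΨeq q hq, F0]
    simp only [neg_mul]
  -- positivity of ψ := psi1 aa bb Pi
  have hψpos : ∀ p > (0:ℝ), 0 < psi1 aa bb Pi p := by
    intro p hp
    rcases lt_or_ge 0 (psi1 aa bb Pi p) with h | h
    · exact h
    exfalso
    have hF1 : 0 ≤ F1 Pi p := F1_nonneg hPi0 hp
    have h2b : 0 ≤ 2*bb*p := by positivity
    have hψp : psi1 aa bb Pi p = aa + 2*bb*p + F1 Pi p := rfl
    have haa : aa = 0 := by linarith
    have hbbp : bb * p = 0 := by linarith
    have hbb : bb = 0 := by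
      rcases mul_eq_zero.mp hbbp with h' | h'
      · exact h'
      · exact absurd h' hp.ne'
    have hF10 : F1 Pi p = 0 := by linarith
    have hInt : Integrable (fun x => x*(1 - exp (-(p*x)))) Pi :=
      integrable_bound hPi0 hfin (Continuous.aestronglyMeasurable (by continuity))
        (fun x hx => bound_F1 hx hp le_rfl)
    have hae : (fun x => x*(1 - exp (-(p*x)))) =ᵐ[Pi] 0 := by
      refine (MeasureTheory.integral_eq_zero_iff_of_nonneg_ae ?_ hInt).mp hF10
      filter_upwards [ae_pos hPi0] with x hx
      have h1 := one_sub_exp_nonneg (t := p*x) (by positivity)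
      have : (0:ℝ) ≤ x * (1 - exp (-(p*x))) := by positivity
      simpa using this
    have hfalse : ∀ᵐ x ∂Pi, False := by
      filter_upwards [ae_pos hPi0, hae] with x hx h0
      have h1 : exp (-(p*x)) < 1 := Real.exp_lt_one_iff.mpr (by nlinarith)
      have h2 : 0 < x * (1 - exp (-(p*x))) := mul_pos hx (by linarith)
      have h0' : x * (1 - exp (-(p*x))) = 0 := h0
      linarith
    have hPiz : Pi = 0 := by
      rw [← Measure.measure_univ_eq_zero]
      have h1 := ae_iff.mp hfalse
      simpa using h1
    have hΦ1 : 0 < Φ 1 := hΦpos 1 one_pos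
    have hzero : Ψ (Φ 1) = 0 := by
      rw [hΨeq' (Φ 1) hΦ1, haa, hbb, F0, hPiz]
      simp
    rw [hΦinv 1 one_pos] at hzero
    exact one_ne_zero hzero
  have hψderiv : ∀ p > (0:ℝ), HasDerivAt (psi1 aa bb Pi) (2*bb + chi Pi 2 p) p :=
    fun p hp => psi1_hasDeriv hPi0 hfin aa bb hp
  have hΨderiv : ∀ p > (0:ℝ), HasDerivAt Ψ (psi1 aa bb Pi p) p := by
    intro p hp
    have ha1 : HasDerivAt (fun p : ℝ => aa*p) aa p := by
      simpa using (hasDerivAt_id p).const_mul aa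
    have ha2 : HasDerivAt (fun p : ℝ => bb*p^2) (bb*(2*p^1)) p :=
      (hasDerivAt_pow 2 p).const_mul bb
    have h1 := (ha1.add ha2).add (F0_hasDeriv hPi0 hfin hp)
    have h1' : HasDerivAt (fun p => aa*p + bb*p^2 + F0 Pi p) (psi1 aa bb Pi p) p := by
      refine hda_congr h1 ?_
      rw [psi1]
      ring
    have heq : Ψ =ᶠ[nhds p] fun p => aa*p + bb*p^2 + F0 Pi p := by
      filter_upwards [Ioi_mem_nhds hp] with y hy using hΨeq' y hy
    exact h1'.congr_of_eventuallyEq heq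
  have hΨmono : StrictMonoOn Ψ (Ioi 0) := by
    apply strictMonoOn_of_deriv_pos (convex_Ioi 0)
    · intro p hp
      exact (hΨderiv p hp).continuousAt.continuousWithinAt
    · intro p hp
      rw [interior_Ioi] at hp
      rw [(hΨderiv p hp).deriv]
      exact hψpos p hp
  have hΨnonneg : ∀ p > (0:ℝ), 0 ≤ Ψ p := by
    intro p hp
    rw [hΨeq' p hp]
    have h0 := F0_nonneg (Pi := Pi) p
    have h1 : 0 ≤ aa*p := mul_nonneg ha hp.le
    have h2 : 0 ≤ bb*p^2 := by positivity
    linarith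
  have hΨpos : ∀ p > (0:ℝ), 0 < Ψ p := by
    intro p hp
    have h1 : Ψ (p/2) < Ψ p :=
      hΨmono (mem_Ioi.mpr (by linarith)) (mem_Ioi.mpr hp) (by linarith)
    linarith [hΨnonneg (p/2) (by linarith)]
  have hΦmono : MonotoneOn Φ (Ioi 0) := by
    intro q1 h1 q2 h2 hle
    by_contra hcon
    push_neg at hcon
    have h3 := hΨmono (mem_Ioi.mpr (hΦpos q2 h2)) (mem_Ioi.mpr (hΦpos q1 h1)) hcon
    rw [hΦinv q1 h1, hΦinv q2 h2] at h3
    linarith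
  have hΦcont : ∀ q > (0:ℝ), ContinuousAt Φ q := by
    intro q hq
    apply continuousAt_of_monotoneOn_of_image_mem_nhds hΦmono (Ioi_mem_nhds hq)
    apply Filter.mem_of_superset (Ioi_mem_nhds (hΦpos q hq))
    intro p hp
    exact ⟨Ψ p, mem_Ioi.mpr (hΨpos p hp), hinvΦ p hp⟩
  have hΦderivAt : ∀ q > (0:ℝ), HasDerivAt Φ ((psi1 aa bb Pi (Φ q))⁻¹) q := by
    intro q hq
    apply HasDerivAt.of_local_left_inverse (hΦcont q hq) (hΨderiv (Φ q) (hΦpos q hq))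
      (hψpos (Φ q) (hΦpos q hq)).ne'
    filter_upwards [Ioi_mem_nhds hq] with y hy using hΦinv y hy
  have hderivΦ : ∀ q > (0:ℝ), deriv Φ q = (psi1 aa bb Pi (Φ q))⁻¹ :=
    fun q hq => (hΦderivAt q hq).deriv
  -- generator framework
  set g : Gen → ℝ → ℝ := genF aa bb Pi Φ with hgdef
  have hpos : ∀ i, ∀ q ∈ Ioi (0:ℝ), 0 ≤ g i q := by
    intro i q hq
    have hq0 : (0:ℝ) < q := hq
    cases i with
    | z => simp [hgdef, genF]
    | c2 => norm_num [hgdef, genF]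
    | ca => simpa [hgdef, genF] using ha
    | cb => simpa [hgdef, genF] using hb
    | w =>
        simp only [hgdef, genF]
        exact inv_nonneg.mpr (hψpos (Φ q) (hΦpos q hq0)).le
    | v =>
        simp only [hgdef, genF]
        exact inv_nonneg.mpr (hΦpos q hq0).le
    | xi k => simpa [hgdef, genF] using chi_nonneg hPi0 (k+2) (Φ q)
    | ga k => simpa [hgdef, genF] using Ga_nonneg hPi0 k (Φ q)
    | ta k => simpa [hgdef, genF] using Ta_nonneg hPi0 k (Φ q)
  have hder : ∀ i, ∀ q ∈ Ioi (0:ℝ), HasDerivAt (g i) (-(SS g (genD i) q)) q := by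
    intro i q hq
    have hq0 : (0:ℝ) < q := hq
    have hp0 : 0 < Φ q := hΦpos q hq0
    have hψ0 : psi1 aa bb Pi (Φ q) ≠ 0 := (hψpos (Φ q) hp0).ne'
    cases i with
    | z =>
        refine hda_congr (hasDerivAt_const q (0:ℝ)) ?_
        simp [SS, PP, genD, hgdef, genF]
    | c2 =>
        refine hda_congr (hasDerivAt_const q (2:ℝ)) ?_
        simp [SS, PP, genD, hgdef, genF]
    | ca =>
        refine hda_congr (hasDerivAt_const q aa) ?_
        simp [SS, PP, genD, hgdef, genF]
    | cb =>
        refine hda_congr (hasDerivAt_const q bb) ?_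
        simp [SS, PP, genD, hgdef, genF]
    | w =>
        have hcomp := HasDerivAt.comp q (hψderiv (Φ q) hp0) (hΦderivAt q hq0)
        have hinv : HasDerivAt (fun y => (psi1 aa bb Pi (Φ y))⁻¹)
            (-((2*bb + chi Pi 2 (Φ q)) * (psi1 aa bb Pi (Φ q))⁻¹) /
              (psi1 aa bb Pi (Φ q))^2) q := hcomp.inv hψ0
        refine hda_congr hinv ?_
        simp only [SS, PP, genD, hgdef, genF, Multiset.insert_eq_cons, Multiset.map_cons,
          Multiset.map_singleton, Multiset.prod_cons, Multiset.prod_singleton,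
          Multiset.sum_cons, Multiset.sum_singleton]
        ring
    | v =>
        have hinv : HasDerivAt (fun y => (Φ y)⁻¹)
            (-((psi1 aa bb Pi (Φ q))⁻¹) / (Φ q)^2) q := (hΦderivAt q hq0).inv hp0.ne'
        refine hda_congr hinv ?_
        simp only [SS, PP, genD, hgdef, genF, Multiset.insert_eq_cons, Multiset.map_cons,
          Multiset.map_singleton, Multiset.prod_cons, Multiset.prod_singleton,
          Multiset.sum_cons, Multiset.sum_singleton]
        ring
    | xi k =>
        have hcomp := HasDerivAt.comp q (chi_hasDeriv hPi0 hfin k hp0) (hΦderivAt q hq0)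
        refine hda_congr hcomp ?_
        simp only [SS, PP, genD, hgdef, genF, Multiset.insert_eq_cons, Multiset.map_cons,
          Multiset.map_singleton, Multiset.prod_cons, Multiset.prod_singleton,
          Multiset.sum_cons, Multiset.sum_singleton]
        ring
    | ga k =>
        have hcomp := HasDerivAt.comp q (Ga_hasDeriv hPi0 hfin k hp0) (hΦderivAt q hq0)
        refine hda_congr hcomp ?_
        simp only [SS, PP, genD, hgdef, genF, Multiset.insert_eq_cons, Multiset.map_cons,
          Multiset.map_singleton, Multiset.prod_cons, Multiset.prod_singleton,
          Multiset.sum_cons, Multiset.sum_singleton]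
        ring
    | ta k =>
        have hcomp := HasDerivAt.comp q (Ta_hasDeriv hPi0 hfin k hp0) (hΦderivAt q hq0)
        refine hda_congr hcomp ?_
        simp only [SS, PP, genD, hgdef, genF, Multiset.insert_eq_cons, Multiset.map_cons,
          Multiset.map_singleton, Multiset.prod_cons, Multiset.prod_singleton,
          Multiset.sum_cons, Multiset.sum_singleton]
        ring
  refine ⟨?_, ?_, ?_⟩
  · -- (a) 1/Φ' is Bernstein
    refine isBernstein_of_SS g hpos genD hder (fun q => 1 / deriv Φ q)
      ({{Gen.c2, Gen.cb, Gen.w}, {Gen.xi 0, Gen.w}} : Multiset (Multiset Gen)) ?_ ?_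
    · intro q hq
      show 0 ≤ 1 / deriv Φ q
      rw [hderivΦ q hq, one_div, inv_inv]
      exact (hψpos (Φ q) (hΦpos q hq)).le
    · intro q hq
      have hq0 : (0:ℝ) < q := hq
      have hp0 : 0 < Φ q := hΦpos q hq0
      have hcomp := HasDerivAt.comp q (hψderiv (Φ q) hp0) (hΦderivAt q hq0)
      have heq : (fun q => 1/deriv Φ q) =ᶠ[nhds q] (psi1 aa bb Pi ∘ Φ) := by
        filter_upwards [Ioi_mem_nhds hq] with y hy
        rw [Function.comp_apply, hderivΦ y hy, one_div, inv_inv]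
      have h2 := hcomp.congr_of_eventuallyEq heq
      refine hda_congr h2 ?_
      simp only [SS, PP, genD, hgdef, genF, Multiset.insert_eq_cons, Multiset.map_cons,
        Multiset.map_singleton, Multiset.prod_cons, Multiset.prod_singleton,
        Multiset.sum_cons, Multiset.sum_singleton]
      ring
  · -- (b) q/Φ(q) is Bernstein
    refine isBernstein_of_SS g hpos genD hder (fun q => q / Φ q)
      ({{Gen.cb, Gen.w}, {Gen.ta 0, Gen.w}} : Multiset (Multiset Gen)) ?_ ?_
    · intro q hq
      exact div_nonneg hq.le (hΦpos q hq).le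
    · intro q hq
      have hq0 : (0:ℝ) < q := hq
      have hp0 : 0 < Φ q := hΦpos q hq0
      have hψ0 : psi1 aa bb Pi (Φ q) ≠ 0 := (hψpos (Φ q) hp0).ne'
      have hdiv := (hasDerivAt_id q).div (hΦderivAt q hq0) hp0.ne'
      refine hda_congr hdiv ?_
      have hqeq : aa * Φ q + bb * (Φ q)^2 + F0 Pi (Φ q) = q := by
        rw [← hΨeq' (Φ q) hp0]
        exact hΦinv q hq0
      have hkey := key_sub hPi0 hfin hp0
      have e1 : Φ q * psi1 aa bb Pi (Φ q) - q = (bb + Ta Pi 0 (Φ q)) * (Φ q)^2 := by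
        have hrfl : psi1 aa bb Pi (Φ q) = aa + 2*bb*(Φ q) + F1 Pi (Φ q) := rfl
        rw [hrfl]
        linear_combination hkey + hqeq
      simp only [SS, PP, genD, hgdef, genF, Multiset.insert_eq_cons, Multiset.map_cons,
        Multiset.map_singleton, Multiset.prod_cons, Multiset.prod_singleton,
        Multiset.sum_cons, Multiset.sum_singleton, id_eq]
      rw [eq_div_iff (pow_ne_zero 2 hp0.ne')]
      linear_combination (-(psi1 aa bb Pi (Φ q))⁻¹) * e1 + (Φ q) * (mul_inv_cancel₀ hψ0)
  · -- (c) 1/(Φ Φ') is completely monotone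
    refine isCM_of_SS g hpos genD hder (fun q => 1 / (Φ q * deriv Φ q))
      ({{Gen.ca, Gen.v}, {Gen.c2, Gen.cb}, {Gen.ga 0}} : Multiset (Multiset Gen)) ?_
    intro q hq
    have hq0 : (0:ℝ) < q := hq
    have hp0 : 0 < Φ q := hΦpos q hq0
    have hψ0 : psi1 aa bb Pi (Φ q) ≠ 0 := (hψpos (Φ q) hp0).ne'
    have hF1G := F1_eq_Ga (Pi := Pi) hp0
    show 1 / (Φ q * deriv Φ q) = _
    rw [hderivΦ q hq0]
    simp only [SS, PP, genD, hgdef, genF, Multiset.insert_eq_cons, Multiset.map_cons,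
      Multiset.map_singleton, Multiset.prod_cons, Multiset.prod_singleton,
      Multiset.sum_cons, Multiset.sum_singleton]
    rw [one_div, mul_inv, inv_inv]
    have hrfl : psi1 aa bb Pi (Φ q) = aa + 2*bb*(Φ q) + F1 Pi (Φ q) := rfl
    rw [hrfl, hF1G]
    linear_combination (2*bb + Ga Pi 0 (Φ q)) * (inv_mul_cancel₀ hp0.ne')

end MainProof
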